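/- arXiv:2301.06288 — 5 statements merged into one kernel-verified Lean document; each statement's English description precedes it below -/
import Mathlib

section
/- Let p(z) = u(z) + i v(z) be an entire function on ℂ. Suppose there exist constants C, s > 0 and a sequence ρ_n → ∞ of positive reals such that v(z) ≤ C ρ_n^s whenever |z| = ρ_n, for all n. Then p is a polynomial of degree at most s. -/
/-!
The function `-i p` has real part `Im p`, and `Im p ≤ C ρₙ^s` spreads from the circle `|z| = ρₙ`
to the whole disc by the maximum modulus principle applied to `exp (-i p)`. Borel–Carathéodory
then bounds `|p| ≤ 2 C ρₙ^s + 3 |p 0|` on `|z| = ρₙ / 2`, and Cauchy's estimates along these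
circles kill every Taylor coefficient of order `n > s`.
-/

open Filter Metric Topology Polynomial

namespace Complex

theorem im_le_of_forall_mem_frontier_im_le {E : Type*} [NormedAddCommGroup E] [NormedSpace ℂ E]
    [Nontrivial E] {f : E → ℂ} {U : Set E} (hU : Bornology.IsBounded U)
    (hf : DiffContOnCl ℂ f U) {M : ℝ} (hM : ∀ z ∈ frontier U, (f z).im ≤ M) {z : E}
    (hz : z ∈ closure U) : (f z).im ≤ M := by
  have norm_exp_eq : ∀ w, ‖exp (-I * f w)‖ = Real.exp (f w).im := fun w => by
    simp [norm_exp]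
  have hg : DiffContOnCl ℂ (fun w => exp (-I * f w)) U :=
    differentiable_exp.comp_diffContOnCl (hf.const_smul (-I))
  rw [← Real.exp_le_exp, ← norm_exp_eq]
  exact norm_le_of_forall_mem_frontier_norm_le hU hg
    (fun w hw => (norm_exp_eq w).trans_le (Real.exp_le_exp.2 (hM w hw))) hz

theorem norm_le_of_forall_mem_sphere_im_le {f : ℂ → ℂ} {r M : ℝ} (hr : 0 < r) (hM : 0 < M)
    (hf : DiffContOnCl ℂ f (ball 0 r)) (him : ∀ z ∈ sphere 0 r, (f z).im ≤ M) {z : ℂ}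
    (hz : ‖z‖ = r / 2) : ‖f z‖ ≤ 2 * M + 3 * ‖f 0‖ := by
  have him_ball : ∀ w ∈ ball (0 : ℂ) r, (f w).im ≤ M := fun w hw =>
    im_le_of_forall_mem_frontier_im_le isBounded_ball hf
      (by rwa [frontier_ball 0 hr.ne']) (subset_closure hw)
  have hbc := borelCaratheodory (f := fun w => -I * f w) (z := z) hM
    (hf.differentiableOn.const_mul (-I)) (fun w hw => by simpa using him_ball w hw) hr
    (by rw [mem_ball_zero_iff, hz]; linarith)
  have hr2 : r - r / 2 ≠ 0 := by linarith
  simp only [norm_mul, norm_neg, norm_I, one_mul, hz] at hbc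
  convert hbc using 1
  field_simp
  ring

theorem iteratedDeriv_eq_zero_of_norm_le_rpow {ι : Type*} {l : Filter ι} [l.NeBot] {f : ℂ → ℂ}
    (hf : Differentiable ℂ f) {r : ι → ℝ} (hr : Tendsto r l atTop) {A B s : ℝ} (hs : 0 ≤ s)
    (hbound : ∀ i, ∀ z ∈ sphere 0 (r i), ‖f z‖ ≤ A * r i ^ s + B) {n : ℕ} (hn : s < n) :
    iteratedDeriv n f 0 = 0 := by
  have cauchy : ∀ᶠ i in l, ‖iteratedDeriv n f 0‖ ≤
      n.factorial * (A * r i ^ (s - n) + B * r i ^ (-(n : ℝ))) := by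
    filter_upwards [hr.eventually_gt_atTop 0] with i hi
    calc ‖iteratedDeriv n f 0‖ ≤ n.factorial * (A * r i ^ s + B) / r i ^ n :=
          norm_iteratedDeriv_le_of_forall_mem_sphere_norm_le n hi hf.diffContOnCl (hbound i)
      _ = n.factorial * (A * r i ^ (s - n) + B * r i ^ (-(n : ℝ))) := by
          rw [Real.rpow_sub hi, Real.rpow_neg hi.le, Real.rpow_natCast]
          field_simp
  have hlim : Tendsto (fun i => (n.factorial : ℝ) * (A * r i ^ (s - n) + B * r i ^ (-(n : ℝ))))
      l (𝓝 0) := by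
    have h₁ := (tendsto_rpow_neg_atTop (sub_pos.2 hn)).comp hr
    have h₂ := (tendsto_rpow_neg_atTop (hs.trans_lt hn)).comp hr
    simpa [Function.comp_def] using
      ((h₁.const_mul A).add (h₂.const_mul B)).const_mul (n.factorial : ℝ)
  exact norm_le_zero_iff.1 (ge_of_tendsto hlim cauchy)

theorem exists_polynomial_of_iteratedDeriv_eq_zero {f : ℂ → ℂ} (hf : Differentiable ℂ f) {d : ℕ}
    (hd : ∀ n, d < n → iteratedDeriv n f 0 = 0) :
    ∃ q : ℂ[X], q.natDegree ≤ d ∧ ∀ z, f z = q.eval z := by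
  set a : ℕ → ℂ := fun n => (n.factorial : ℂ)⁻¹ * iteratedDeriv n f 0
  refine ⟨∑ k ∈ Finset.range (d + 1), C (a k) * X ^ k,
    natDegree_sum_le_of_forall_le _ _ fun k hk =>
      (natDegree_C_mul_X_pow_le _ _).trans (Nat.lt_succ_iff.1 (Finset.mem_range.1 hk)), fun z => ?_⟩
  rw [← taylorSeries_eq_of_entire' 0 z hf, tsum_eq_sum (s := Finset.range (d + 1))]
  · simp [eval_finsetSum, a]
  · intro n hn
    simp [hd n (by simpa using hn)]

end Complex

/-- An entire function whose imaginary part is bounded above by `C ρ_n ^ s` on a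
sequence of circles `|z| = ρ_n` with `ρ_n → ∞` is a polynomial of degree at most `s`. -/
theorem entire_imaginary_part_bound_polynomial
    (p : ℂ → ℂ) (hp : Differentiable ℂ p)
    (C s : ℝ) (hC : 0 < C) (hs : 0 < s)
    (ρ : ℕ → ℝ) (hρpos : ∀ n, 0 < ρ n) (hρ : Tendsto ρ atTop atTop)
    (hbound : ∀ n, ∀ z : ℂ, ‖z‖ = ρ n → (p z).im ≤ C * ρ n ^ s) :
    ∃ q : Polynomial ℂ, (q.natDegree : ℝ) ≤ s ∧ ∀ z, p z = q.eval z := by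
  have half_circle_bound : ∀ k, ∀ z ∈ sphere 0 (ρ k / 2),
      ‖p z‖ ≤ 2 * C * 2 ^ s * (ρ k / 2) ^ s + 3 * ‖p 0‖ := by
    intro k z hz
    rw [mem_sphere_zero_iff_norm] at hz
    have := Complex.norm_le_of_forall_mem_sphere_im_le (hρpos k)
      (mul_pos hC (Real.rpow_pos_of_pos (hρpos k) s))
      hp.diffContOnCl (fun w hw => hbound k w (mem_sphere_zero_iff_norm.1 hw)) hz
    have hρs : 2 ^ s * (ρ k / 2) ^ s = ρ k ^ s := by
      rw [← Real.mul_rpow zero_le_two (by linarith [hρpos k]), mul_div_cancel₀ _ two_ne_zero]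
    rw [mul_assoc _ (2 ^ s), hρs]
    linarith
  obtain ⟨q, hq_deg, hq⟩ := Complex.exists_polynomial_of_iteratedDeriv_eq_zero hp (d := ⌊s⌋₊)
    fun n hn => Complex.iteratedDeriv_eq_zero_of_norm_le_rpow hp (hρ.atTop_div_const two_pos) hs.le
      half_circle_bound (Nat.floor_lt hs.le |>.1 hn)
  exact ⟨q, (Nat.cast_le.2 hq_deg).trans (Nat.floor_le hs.le), hq⟩
end

section
/- Let w : ℝ^d → ℝ be continuous, and suppose that for every ξ' ∈ ℝ^{d-1} and every coordinate index j, the single-variable function ξ_j ↦ w(ξ_j; ξ') extends to an entire function on ℂ which is a polynomial of degree at most 1 in z_j. Then w extends to an entire function on ℂ^d of the form w(z) = Σ_{α ∈ {0,1}^d} a_α z^α with all coefficients a_α real (i.e., w is a multilinear polynomial with real coefficients). -/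
/-!
Affinity in `ξⱼ` gives `w ξ = w(ξ[j ↦ 0]) + ξⱼ · (w(ξ[j ↦ 1]) - w(ξ[j ↦ 0]))`, and both
functions of `ξ` on the right no longer depend on `ξⱼ` and are still affine in every other
coordinate. Peeling off the coordinates one at a time expands `w` into monomials `∏_{i ∈ S} ξᵢ`
with coefficients that become constants once every coordinate is used up; the same polynomial
over `ℂ` is the entire extension.
-/

open Finset Function

def SeparatelyAffineOn {ι R : Type*} [DecidableEq ι] [CommRing R] (U : Finset ι)
    (w : (ι → R) → R) : Prop :=
  ∀ j ∈ U, ∀ ξ : ι → R, ∃ a b : R, ∀ x : R, w (update ξ j x) = a * x + b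

namespace SeparatelyAffineOn

variable {ι R : Type*} [DecidableEq ι] [CommRing R] {U : Finset ι} {w : (ι → R) → R}

theorem mono {V : Finset ι} (hw : SeparatelyAffineOn V w) (hUV : U ⊆ V) :
    SeparatelyAffineOn U w :=
  fun j hj => hw j (hUV hj)

theorem sub {v : (ι → R) → R} (hw : SeparatelyAffineOn U w) (hv : SeparatelyAffineOn U v) :
    SeparatelyAffineOn U (w - v) := by
  intro j hj ξ
  obtain ⟨a, b, hab⟩ := hw j hj ξ
  obtain ⟨c, e, hce⟩ := hv j hj ξ
  exact ⟨a - c, b - e, fun x => by simp only [Pi.sub_apply, hab, hce]; ring⟩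

theorem comp_update {k : ι} (hk : k ∉ U) (hw : SeparatelyAffineOn U w) (c : R) :
    SeparatelyAffineOn U (fun ξ => w (update ξ k c)) := by
  intro j hj ξ
  have hjk : j ≠ k := fun h => hk (h ▸ hj)
  obtain ⟨a, b, hab⟩ := hw j hj (update ξ k c)
  exact ⟨a, b, fun x => (congrArg w (update_comm hjk x c ξ)).trans (hab x)⟩

theorem eq_add_mul_sub {j : ι} (hw : SeparatelyAffineOn U w) (hj : j ∈ U) (ξ : ι → R) :
    w ξ = w (update ξ j 0) + ξ j * (w (update ξ j 1) - w (update ξ j 0)) := by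
  obtain ⟨a, b, hab⟩ := hw j hj ξ
  have hξ := hab (ξ j)
  rw [update_eq_self] at hξ
  rw [hξ, hab 0, hab 1]
  ring

/-- The coefficients see only the coordinates outside `U`. -/
theorem exists_sum_powerset_mul_prod (hw : SeparatelyAffineOn U w) :
    ∃ c : Finset ι → (ι → R) → R, ∀ ξ : ι → R,
      w ξ = ∑ S ∈ U.powerset, c S (U.piecewise 0 ξ) * ∏ i ∈ S, ξ i := by
  induction U using Finset.induction_on generalizing w with
  | empty => exact ⟨fun _ => w, fun ξ => by simp⟩
  | insert j U hjU ih =>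
    have hwU := hw.mono (subset_insert j U)
    obtain ⟨c₀, hc₀⟩ := ih (hwU.comp_update hjU 0)
    obtain ⟨c₁, hc₁⟩ := ih ((hwU.comp_update hjU 1).sub (hwU.comp_update hjU 0))
    refine ⟨fun S => if j ∈ S then c₁ (S.erase j) else c₀ S, fun ξ => ?_⟩
    have hjS : ∀ S ∈ U.powerset, j ∉ S := fun S hS h => hjU (mem_powerset.1 hS h)
    have hpiecewise :
        (insert j U).piecewise (0 : ι → R) ξ = U.piecewise (0 : ι → R) (update ξ j 0) := by
      rw [piecewise_insert, Pi.zero_apply, update_piecewise_of_notMem _ _ _ hjU]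
    have hprod : ∀ S ∈ U.powerset, ∏ i ∈ S, update ξ j 0 i = ∏ i ∈ S, ξ i :=
      fun S hS => prod_update_of_notMem (hjS S hS) ξ 0
    have h₀ : w (update ξ j 0) =
        ∑ S ∈ U.powerset, c₀ S ((insert j U).piecewise 0 ξ) * ∏ i ∈ S, ξ i := by
      rw [← update_idem, hc₀, hpiecewise]
      exact sum_congr rfl fun S hS => by rw [hprod S hS]
    have h₁ : w (update ξ j 1) - w (update ξ j 0) =
        ∑ S ∈ U.powerset, c₁ S ((insert j U).piecewise 0 ξ) * ∏ i ∈ S, ξ i := by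
      have := hc₁ (update ξ j 0)
      simp only [Pi.sub_apply, update_idem] at this
      rw [this, hpiecewise]
      exact sum_congr rfl fun S hS => by rw [hprod S hS]
    rw [hw.eq_add_mul_sub (mem_insert_self j U) ξ, h₁, h₀, sum_powerset_insert hjU, mul_sum]
    congr 1 <;> refine sum_congr rfl fun S hS => ?_ <;> dsimp only
    · rw [if_neg (hjS S hS)]
    · rw [if_pos (mem_insert_self j S), erase_insert (hjS S hS), prod_insert (hjS S hS)]
      ring

theorem exists_eq_sum_mul_prod [Fintype ι] (hw : SeparatelyAffineOn univ w) :
    ∃ a : Finset ι → R, ∀ ξ : ι → R, w ξ = ∑ S : Finset ι, a S * ∏ i ∈ S, ξ i := by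
  obtain ⟨c, hc⟩ := hw.exists_sum_powerset_mul_prod
  exact ⟨fun S => c S 0, fun ξ => by simpa [powerset_univ] using hc ξ⟩

end SeparatelyAffineOn

theorem continuous_separately_linear_multilinear_general
    (d : ℕ) (w : (Fin d → ℝ) → ℝ)
    (hlin : ∀ (j : Fin d) (ξ : Fin d → ℝ), ∃ a b : ℝ,
      ∀ x : ℝ, w (Function.update ξ j x) = a * x + b) :
    ∃ a : Finset (Fin d) → ℝ, ∃ W : (Fin d → ℂ) → ℂ,
      Differentiable ℂ W ∧
      (∀ z : Fin d → ℂ, W z = ∑ S : Finset (Fin d), (a S : ℂ) * ∏ j ∈ S, z j) ∧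
      (∀ ξ : Fin d → ℝ, W (fun j => (ξ j : ℂ)) = (w ξ : ℂ)) := by
  obtain ⟨a, ha⟩ := SeparatelyAffineOn.exists_eq_sum_mul_prod fun j _ => hlin j
  refine ⟨a, fun z => ∑ S : Finset (Fin d), (a S : ℂ) * ∏ j ∈ S, z j, by fun_prop,
    fun _ => rfl, fun ξ => ?_⟩
  rw [ha ξ]
  push_cast
  rfl

/-- If a continuous `w : ℝ^d → ℝ` is, in each coordinate separately (with the other
coordinates fixed), the restriction of an entire function that is a polynomial of
degree at most one, then `w` extends to a multilinear polynomial on `ℂ^d` with real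
coefficients: `w(z) = Σ_{α ∈ {0,1}^d} a_α z^α`. -/
theorem continuous_separately_linear_multilinear
    (d : ℕ) (w : (Fin d → ℝ) → ℝ) (hw : Continuous w)
    (hlin : ∀ (j : Fin d) (ξ : Fin d → ℝ), ∃ a b : ℝ,
      ∀ x : ℝ, w (Function.update ξ j x) = a * x + b) :
    ∃ a : Finset (Fin d) → ℝ, ∃ W : (Fin d → ℂ) → ℂ,
      Differentiable ℂ W ∧
      (∀ z : Fin d → ℂ, W z = ∑ S : Finset (Fin d), (a S : ℂ) * ∏ j ∈ S, z j) ∧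
      (∀ ξ : Fin d → ℝ, W (fun j => (ξ j : ℂ)) = (w ξ : ℂ)) :=
  continuous_separately_linear_multilinear_general d w hlin
end

section
/- Let w : ℝ → ℝ be continuous, let t ≠ 0, and suppose there exists a nonzero compactly supported distribution φ on ℝ such that the solution U(t)φ = F^{-1}[e^{-itw(ξ)} F φ] also has compact support. Let f and g be the entire extensions of e^{-itw}·Fφ and Fφ respectively (given by Paley–Wiener–Schwartz), and let F(z) = f(z)/g(z) be the resulting meromorphic function. Then F has no real poles. -/
open Filter Topology

/-! On the real line `‖f / g‖ = ‖e^{-itw}‖ = 1` wherever `g ≠ 0`. Since `g` is entire and not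
identically zero, its zeros are isolated, so real points approach any real `p` inside the domain
`{g ≠ 0}` of `f / g`; along them `‖f / g‖` stays equal to `1` and cannot tend to infinity. -/

theorem Differentiable.eventually_ne_zero {E : Type*} [NormedAddCommGroup E] [NormedSpace ℂ E]
    [CompleteSpace E] {g : ℂ → E} (hg : Differentiable ℂ g) (hg0 : ∃ z, g z ≠ 0) (z₀ : ℂ) :
    ∀ᶠ z in 𝓝[≠] z₀, g z ≠ 0 := by
  refine (hg.analyticAt z₀).eventually_eq_zero_or_eventually_ne_zero.resolve_left fun h ↦ ?_
  obtain ⟨z, hz⟩ := hg0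
  have hg_entire := Complex.analyticOnNhd_univ_iff_differentiable.2 hg
  exact hz <| (hg_entire.eqOn_zero_of_preconnected_of_eventuallyEq_zero
    isPreconnected_univ (Set.mem_univ z₀) h) (Set.mem_univ z)

theorem Complex.tendsto_ofReal_nhdsNE (p : ℝ) :
    Tendsto ((↑) : ℝ → ℂ) (𝓝[≠] p) (𝓝[≠] (p : ℂ)) :=
  Complex.continuous_ofReal.continuousWithinAt.tendsto_nhdsWithin
    fun _ hx ↦ Complex.ofReal_injective.ne hx

theorem Complex.norm_div_eq_one_of_eq_exp_mul {a b z : ℂ} (hz : z.re = 0) (hb : b ≠ 0)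
    (h : a = Complex.exp z * b) : ‖a / b‖ = 1 := by
  rw [h, mul_div_assoc, div_self hb, mul_one, Complex.norm_exp, hz, Real.exp_zero]

theorem no_real_poles_general
    (w : ℝ → ℝ) (t : ℝ)
    (f g : ℂ → ℂ) (hg : Differentiable ℂ g)
    (hg0 : ∃ z, g z ≠ 0)
    (hfg : ∀ ξ : ℝ, f ξ = Complex.exp (-Complex.I * t * w ξ) * g ξ) :
    ∀ p : ℝ, ¬ Tendsto (fun z : ℂ => ‖f z / g z‖)
      (nhdsWithin (p : ℂ) {z : ℂ | g z ≠ 0}) atTop := by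
  intro p hpole
  have hg_real : ∀ᶠ ξ : ℝ in 𝓝[≠] p, g ξ ≠ 0 :=
    (Complex.tendsto_ofReal_nhdsNE p).eventually (hg.eventually_ne_zero hg0 p)
  have hreal : Tendsto ((↑) : ℝ → ℂ) (𝓝[≠] p) (𝓝[{z | g z ≠ 0}] (p : ℂ)) :=
    tendsto_nhdsWithin_iff.2
      ⟨(Complex.tendsto_ofReal_nhdsNE p).mono_right nhdsWithin_le_nhds, hg_real⟩
  have hunimodular : ∀ᶠ ξ : ℝ in 𝓝[≠] p, 1 = ‖f ξ / g ξ‖ :=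
    hg_real.mono fun ξ hξ ↦ (Complex.norm_div_eq_one_of_eq_exp_mul (by simp) hξ (hfg ξ)).symm
  exact not_tendsto_atTop_of_tendsto_nhds (tendsto_const_nhds.congr' hunimodular)
    (hpole.comp hreal)

/-- If `w : ℝ → ℝ` is continuous, `t ≠ 0`, and `f, g` are the entire extensions of
`e^{-itw}·𝓕φ` and `𝓕φ` (for a nonzero compactly supported distribution `φ` whose
evolution `U(t)φ` also has compact support), given by Paley–Wiener–Schwartz — so that
`g` is entire and not identically zero, `f` is entire, and `f(ξ) = e^{-itw(ξ)} g(ξ)`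
for real `ξ` — then the meromorphic function `F = f/g` has no real poles. -/
theorem no_real_poles
    (w : ℝ → ℝ) (hw : Continuous w) (t : ℝ) (ht : t ≠ 0)
    (f g : ℂ → ℂ) (hf : Differentiable ℂ f) (hg : Differentiable ℂ g)
    (hg0 : ∃ z, g z ≠ 0)
    (hfg : ∀ ξ : ℝ, f ξ = Complex.exp (-Complex.I * t * w ξ) * g ξ) :
    ∀ p : ℝ, ¬ Tendsto (fun z : ℂ => ‖f z / g z‖)
      (nhdsWithin (p : ℂ) {z : ℂ | g z ≠ 0}) atTop :=
  no_real_poles_general w t f g hg hg0 hfg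
end

section
/- For 0 < α ≤ 1 and λ ∈ ℂ, the function y(t) = E_α(λ t^α) y(0), where E_α is the Mittag-Leffler function, satisfies the Caputo fractional differential equation ∂_t^α y(t) = λ y(t) for t > 0. -/
open MeasureTheory

/-- The Mittag-Leffler function `E_α(z) = Σ z^k / Γ(αk+1)`. -/
noncomputable def mittagLeffler (α : ℝ) (z : ℂ) : ℂ :=
  ∑' k : ℕ, z ^ k / Complex.Gamma (α * k + 1)

/-- The Caputo fractional derivative of order `0 < α ≤ 1`
(the ordinary derivative when `α = 1`). -/
noncomputable def caputoDeriv (α : ℝ) (y : ℝ → ℂ) (t : ℝ) : ℂ :=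
  if α = 1 then deriv y t
  else (1 / Complex.Gamma (1 - α)) *
    ∫ τ in Set.Ioo (0 : ℝ) t, deriv y τ * (((t - τ) ^ (-α) : ℝ) : ℂ)

/-!
Expanding `E_α(λ t^α) = ∑ λ^k t^(αk) / Γ(αk + 1)`, the series can be differentiated termwise
for `t > 0`, and the Caputo integral of each term is a Beta integral: for `β > 0`,
`(1 / Γ(1 - α)) ∫₀ᵗ β τ^(β-1) (t - τ)^(-α) dτ = Γ(β + 1) / Γ(β + 1 - α) · t^(β - α)`,
which maps the `(k+1)`-st term to `λ` times the `k`-th one. Termwise differentiation and the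
exchange of sum and integral rest on the convergence of `∑ C^k / Γ(αk + 1)` for every `C`,
which follows from the ratio test and the log-convexity estimate
`x Γ(x) ≤ (x + α)^(1-α) Γ(x + α)`.
-/

open Real Set Filter

namespace Real

theorem mul_Gamma_le_rpow_mul_Gamma_add {α x : ℝ} (hα0 : 0 < α) (hα1 : α ≤ 1) (hx : 0 < x) :
    x * Gamma x ≤ (x + α) ^ (1 - α) * Gamma (x + α) := by
  have hxα : 0 < x + α := by linarith
  have hΓ : 0 < Gamma (x + α) := Gamma_pos_of_pos hxα
  -- log-convexity of `Γ` between `x + α` and `x + α + 1`, whose weighted mean is `x + 1`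
  have hconv := convexOn_log_Gamma.2 (mem_Ioi.mpr hxα) (mem_Ioi.mpr (by linarith : 0 < x + α + 1))
    hα0.le (by linarith : 0 ≤ 1 - α) (by ring)
  rw [show α • (x + α) + (1 - α) • (x + α + 1) = x + 1 by simp only [smul_eq_mul]; ring,
    Function.comp_apply, Function.comp_apply, Function.comp_apply, smul_eq_mul, smul_eq_mul,
    Gamma_add_one hxα.ne', log_mul hxα.ne' hΓ.ne', Gamma_add_one hx.ne'] at hconv
  rw [rpow_def_of_pos hxα, ← log_le_log_iff (by positivity) (by positivity),
    log_mul (by positivity) hΓ.ne', log_exp]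
  linarith

theorem Gamma_mul_rpow_le_two_mul_Gamma_add {α x : ℝ} (hα0 : 0 < α) (hα1 : α ≤ 1) (hx : 1 ≤ x) :
    Gamma x * x ^ α ≤ 2 * Gamma (x + α) := by
  have hx0 : 0 < x := by linarith
  have hpow : (x + α) ^ (1 - α) ≤ 2 * x ^ (1 - α) :=
    calc (x + α) ^ (1 - α) ≤ (2 * x) ^ (1 - α) := by gcongr; linarith
      _ = 2 ^ (1 - α) * x ^ (1 - α) := mul_rpow zero_le_two hx0.le
      _ ≤ 2 * x ^ (1 - α) := by
        gcongr
        exact rpow_le_self_of_one_le one_le_two (by linarith)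
  have hsplit : x = x ^ (1 - α) * x ^ α := by rw [← rpow_add hx0]; simp
  have key : x ^ (1 - α) * (Gamma x * x ^ α) ≤ x ^ (1 - α) * (2 * Gamma (x + α)) :=
    calc x ^ (1 - α) * (Gamma x * x ^ α) = (x ^ (1 - α) * x ^ α) * Gamma x := by ring
      _ = x * Gamma x := by rw [← hsplit]
      _ ≤ (x + α) ^ (1 - α) * Gamma (x + α) := mul_Gamma_le_rpow_mul_Gamma_add hα0 hα1 hx0
      _ ≤ 2 * x ^ (1 - α) * Gamma (x + α) := by gcongr
      _ = x ^ (1 - α) * (2 * Gamma (x + α)) := by ring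
  exact le_of_mul_le_mul_left key (by positivity)

theorem summable_pow_div_Gamma_mul_add_one {α : ℝ} (hα0 : 0 < α) (hα1 : α ≤ 1) (C : ℝ) :
    Summable fun k : ℕ => C ^ k / Gamma (α * k + 1) := by
  refine summable_of_ratio_norm_eventually_le (r := 1 / 2) (by norm_num) ?_
  have hlarge : Tendsto (fun k : ℕ => (α * k + 1) ^ α) atTop atTop :=
    (tendsto_rpow_atTop hα0).comp <| tendsto_atTop_add_const_right _ 1 <|
      tendsto_natCast_atTop_atTop.const_mul_atTop hα0
  filter_upwards [hlarge.eventually_ge_atTop (4 * |C|)] with k hk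
  have hx : 1 ≤ α * k + 1 := le_add_of_nonneg_left (by positivity)
  have hΓ : 0 < Gamma (α * k + 1) := Gamma_pos_of_pos (by linarith)
  have hΓα : 0 < Gamma (α * k + 1 + α) := Gamma_pos_of_pos (by linarith)
  have hratio : 2 * |C| * Gamma (α * k + 1) ≤ Gamma (α * k + 1 + α) := by
    nlinarith [Gamma_mul_rpow_le_two_mul_Gamma_add hα0 hα1 hx]
  rw [show α * ((k + 1 : ℕ) : ℝ) + 1 = α * k + 1 + α by push_cast; ring]
  simp only [norm_div, norm_pow, Real.norm_eq_abs, abs_of_pos hΓ, abs_of_pos hΓα]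
  rw [div_le_iff₀ hΓα, pow_succ]
  calc |C| ^ k * |C| = 1 / 2 * (|C| ^ k / Gamma (α * k + 1)) * (2 * |C| * Gamma (α * k + 1)) := by
        field_simp
    _ ≤ 1 / 2 * (|C| ^ k / Gamma (α * k + 1)) * Gamma (α * k + 1 + α) := by gcongr

end Real

theorem integral_Ioo_rpow_mul_sub_rpow {a b t : ℝ} (ha : 0 < a) (hb : 0 < b) (ht : 0 < t) :
    ∫ τ in Ioo 0 t, τ ^ (a - 1) * (t - τ) ^ (b - 1) =
      Gamma a * Gamma b / Gamma (a + b) * t ^ (a + b - 1) := by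
  have hΓ : Complex.Gamma (a + b) ≠ 0 := by
    rw [← Complex.ofReal_add, Complex.Gamma_ofReal]
    exact_mod_cast (Gamma_pos_of_pos (by linarith)).ne'
  have hbeta :
      Complex.betaIntegral a b = Complex.Gamma a * Complex.Gamma b / Complex.Gamma (a + b) := by
    rw [eq_div_iff hΓ, Complex.Gamma_mul_Gamma_eq_betaIntegral (by simpa) (by simpa), mul_comm]
  have hscaled := Complex.betaIntegral_scaled a b ht
  rw [intervalIntegral.integral_of_le ht.le, integral_Ioc_eq_integral_Ioo] at hscaled
  apply Complex.ofReal_injective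
  rw [← integral_complex_ofReal]
  calc ∫ τ in Ioo 0 t, ((τ ^ (a - 1) * (t - τ) ^ (b - 1) : ℝ) : ℂ)
      = ∫ τ in Ioo 0 t, (τ : ℂ) ^ ((a : ℂ) - 1) * ((t : ℂ) - τ) ^ ((b : ℂ) - 1) := by
        refine setIntegral_congr_fun measurableSet_Ioo fun τ hτ => ?_
        rw [Complex.ofReal_mul, Complex.ofReal_cpow hτ.1.le,
          Complex.ofReal_cpow (sub_pos.2 hτ.2).le]
        push_cast
        rfl
    _ = _ := by
        rw [hscaled, hbeta, ← Complex.ofReal_add, ← Complex.ofReal_one, ← Complex.ofReal_sub,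
          ← Complex.ofReal_cpow ht.le, Complex.Gamma_ofReal, Complex.Gamma_ofReal,
          Complex.Gamma_ofReal]
        push_cast
        ring

theorem integral_Ioo_caputo_rpow {α β t : ℝ} (hα : α < 1) (hβ : 0 < β) (ht : 0 < t) :
    ∫ τ in Ioo 0 t, β * τ ^ (β - 1) * (t - τ) ^ (-α) =
      Gamma (1 - α) * (Gamma (β + 1) / Gamma (β + 1 - α)) * t ^ (β - α) := by
  have hb : 0 < 1 - α := by linarith
  simp_rw [mul_assoc]
  rw [integral_const_mul, show -α = 1 - α - 1 by ring, integral_Ioo_rpow_mul_sub_rpow hβ hb ht,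
    Gamma_add_one hβ.ne', show β + (1 - α) = β + 1 - α by ring, show β + 1 - α - 1 = β - α by ring]
  ring

theorem integrableOn_Ioo_caputo_rpow {α β t : ℝ} (hα : α < 1) (hβ : 0 < β) (ht : 0 < t) :
    IntegrableOn (fun τ => β * τ ^ (β - 1) * (t - τ) ^ (-α)) (Ioo 0 t) := by
  refine Integrable.of_integral_ne_zero ?_
  rw [integral_Ioo_caputo_rpow hα hβ ht]
  have := Gamma_pos_of_pos (sub_pos.2 hα)
  have := Gamma_pos_of_pos (by linarith : 0 < β + 1)
  have := Gamma_pos_of_pos (by linarith : 0 < β + 1 - α)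
  positivity

noncomputable def mittagLefflerCoeff (α : ℝ) (lam : ℂ) (k : ℕ) : ℂ :=
  lam ^ k / (Gamma (α * k + 1) : ℂ)

section MittagLefflerSeries

variable {α : ℝ}

theorem mittagLeffler_mul_rpow_eq_tsum (α : ℝ) (lam : ℂ) {s : ℝ} (hs : 0 ≤ s) :
    mittagLeffler α (lam * (s ^ α : ℝ)) = ∑' k, mittagLefflerCoeff α lam k * (s ^ (α * k) : ℝ) := by
  refine tsum_congr fun k => ?_
  rw [mittagLefflerCoeff, mul_pow, ← Complex.ofReal_pow, ← rpow_mul_natCast hs,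
    ← Complex.ofReal_natCast, ← Complex.ofReal_mul, ← Complex.ofReal_one, ← Complex.ofReal_add,
    Complex.Gamma_ofReal]
  ring

theorem norm_mittagLefflerCoeff (hα : 0 ≤ α) (lam : ℂ) (k : ℕ) :
    ‖mittagLefflerCoeff α lam k‖ = ‖lam‖ ^ k / Gamma (α * k + 1) := by
  rw [mittagLefflerCoeff, norm_div, norm_pow, Complex.norm_real, Real.norm_eq_abs,
    abs_of_pos (Gamma_pos_of_pos (by positivity))]

theorem summable_norm_mittagLefflerCoeff_mul_pow (hα0 : 0 < α) (hα1 : α ≤ 1) (lam : ℂ) (R : ℝ) :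
    Summable fun k => ‖mittagLefflerCoeff α lam k‖ * R ^ k := by
  simp_rw [norm_mittagLefflerCoeff hα0.le, div_mul_eq_mul_div, ← mul_pow]
  exact summable_pow_div_Gamma_mul_add_one hα0 hα1 _

theorem mittagLefflerCoeff_succ_mul_Gamma_div (hα : 0 ≤ α) (lam : ℂ) (k : ℕ) :
    mittagLefflerCoeff α lam (k + 1) * (Gamma (α * (k + 1 : ℕ) + 1) / Gamma (α * k + 1) : ℝ) =
      lam * mittagLefflerCoeff α lam k := by
  have h1 : (Gamma (α * (k + 1 : ℕ) + 1) : ℂ) ≠ 0 :=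
    Complex.ofReal_ne_zero.2 (Gamma_pos_of_pos (by positivity)).ne'
  have h2 : (Gamma (α * k + 1) : ℂ) ≠ 0 :=
    Complex.ofReal_ne_zero.2 (Gamma_pos_of_pos (by positivity)).ne'
  simp only [mittagLefflerCoeff, Complex.ofReal_div]
  field_simp
  ring

theorem norm_mittagLefflerCoeff_mul_rpow (α : ℝ) (lam : ℂ) (k : ℕ) {s : ℝ} (hs : 0 ≤ s) :
    ‖mittagLefflerCoeff α lam k * (s ^ (α * k) : ℝ)‖ =
      ‖mittagLefflerCoeff α lam k‖ * (s ^ α) ^ k := by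
  rw [norm_mul, Complex.norm_real, Real.norm_eq_abs, abs_of_nonneg (by positivity),
    rpow_mul_natCast hs]

theorem norm_mittagLefflerCoeff_mul_deriv_rpow_le (hα0 : 0 < α) (hα1 : α ≤ 1) (lam : ℂ) (k : ℕ)
    {τ s : ℝ} (hτ : 0 < τ) (hs : s ∈ Ioo (τ / 2) (τ + 1)) :
    ‖mittagLefflerCoeff α lam k * (α * k * s ^ (α * k - 1) : ℝ)‖ ≤
      2 / τ * (‖mittagLefflerCoeff α lam k‖ * (2 * (τ + 1) ^ α) ^ k) := by
  have hs0 : 0 < s := lt_trans (by positivity) hs.1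
  have hαk : α * k ≤ 2 ^ k :=
    calc α * k ≤ k := mul_le_of_le_one_left k.cast_nonneg hα1
      _ ≤ 2 ^ k := by exact_mod_cast k.lt_two_pow_self.le
  have hpow : s ^ (α * k) ≤ ((τ + 1) ^ α) ^ k := by
    rw [← rpow_mul_natCast (by positivity)]
    exact rpow_le_rpow hs0.le hs.2.le (by positivity)
  have hinv : s⁻¹ ≤ 2 / τ := by
    rw [inv_le_comm₀ hs0 (by positivity)]
    simpa using hs.1.le
  rw [norm_mul, Complex.norm_real, Real.norm_eq_abs, abs_of_nonneg (by positivity),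
    rpow_sub_one hs0.ne', mul_pow]
  calc ‖mittagLefflerCoeff α lam k‖ * (α * k * (s ^ (α * k) / s))
      = ‖mittagLefflerCoeff α lam k‖ * ((α * k) * s ^ (α * k) * s⁻¹) := by ring
    _ ≤ ‖mittagLefflerCoeff α lam k‖ * (2 ^ k * ((τ + 1) ^ α) ^ k * (2 / τ)) := by gcongr
    _ = _ := by ring

theorem hasDerivAt_mittagLeffler_mul_rpow (hα0 : 0 < α) (hα1 : α ≤ 1) (lam : ℂ) {τ : ℝ}
    (hτ : 0 < τ) :
    HasDerivAt (fun s => mittagLeffler α (lam * (s ^ α : ℝ)))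
      (∑' k : ℕ, mittagLefflerCoeff α lam (k + 1) *
        (α * (k + 1 : ℕ) * τ ^ (α * (k + 1 : ℕ) - 1) : ℝ)) τ := by
  have hU : τ ∈ Ioo (τ / 2) (τ + 1) := ⟨by linarith, by linarith⟩
  have hbound :=
    (summable_norm_mittagLefflerCoeff_mul_pow hα0 hα1 lam (2 * (τ + 1) ^ α)).mul_left (2 / τ)
  have hderiv : ∀ (k : ℕ) s, s ∈ Ioo (τ / 2) (τ + 1) →
      HasDerivAt (fun s => mittagLefflerCoeff α lam k * (s ^ (α * k) : ℝ))
        (mittagLefflerCoeff α lam k * (α * k * s ^ (α * k - 1) : ℝ)) s := fun k s hs =>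
    ((hasDerivAt_rpow_const (Or.inl (lt_trans (by positivity) hs.1).ne')).ofReal_comp).const_mul _
  have htsum := hasDerivAt_tsum_of_isPreconnected hbound isOpen_Ioo (convex_Ioo _ _).isPreconnected
    hderiv (fun k s hs => norm_mittagLefflerCoeff_mul_deriv_rpow_le hα0 hα1 lam k hτ hs) hU
    (Summable.of_norm <| by
      simpa only [norm_mittagLefflerCoeff_mul_rpow α lam _ hτ.le]
        using summable_norm_mittagLefflerCoeff_mul_pow hα0 hα1 lam (τ ^ α)) hU
  rw [(Summable.of_norm_bounded hbound fun k =>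
      norm_mittagLefflerCoeff_mul_deriv_rpow_le hα0 hα1 lam k hτ hU).tsum_eq_zero_add] at htsum
  refine (htsum.congr_of_eventuallyEq ?_).congr_deriv (by simp)
  filter_upwards [Ioi_mem_nhds hτ] with s hs
  exact mittagLeffler_mul_rpow_eq_tsum α lam (le_of_lt hs)

theorem mittagLefflerCoeff_succ_mul_deriv_rpow_one (lam : ℂ) (k : ℕ) (t : ℝ) :
    mittagLefflerCoeff 1 lam (k + 1) *
        ((1 : ℝ) * (k + 1 : ℕ) * t ^ ((1 : ℝ) * (k + 1 : ℕ) - 1) : ℝ) =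
      lam * (mittagLefflerCoeff 1 lam k * (t ^ ((1 : ℝ) * k) : ℝ)) := by
  have hpow : 1 * ((k + 1 : ℕ) : ℝ) * t ^ (1 * ((k + 1 : ℕ) : ℝ) - 1) =
      Gamma (1 * ((k + 1 : ℕ) : ℝ) + 1) / Gamma (1 * (k : ℝ) + 1) * t ^ (1 * (k : ℝ)) := by
    push_cast
    simp only [one_mul, add_sub_cancel_right]
    rw [Gamma_add_one (by positivity),
      mul_div_cancel_right₀ _ (Gamma_pos_of_pos (by positivity)).ne']
  rw [hpow, Complex.ofReal_mul, ← mul_assoc, mittagLefflerCoeff_succ_mul_Gamma_div zero_le_one,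
    mul_assoc]

end MittagLefflerSeries

theorem setIntegral_norm_const_mul_ofReal {s : Set ℝ} (hs : MeasurableSet s) (c : ℂ) {g : ℝ → ℝ}
    (hg : ∀ x ∈ s, 0 ≤ g x) :
    ∫ x in s, ‖c * (g x : ℂ)‖ = ‖∫ x in s, c * (g x : ℂ)‖ := by
  rw [integral_const_mul, integral_complex_ofReal, norm_mul, Complex.norm_real, Real.norm_eq_abs,
    abs_of_nonneg (setIntegral_nonneg hs hg), ← integral_const_mul]
  refine setIntegral_congr_fun hs fun x hx => ?_
  simp only [norm_mul, Complex.norm_real, Real.norm_eq_abs, abs_of_nonneg (hg x hx)]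

section Caputo

variable {α : ℝ}

theorem integral_mittagLefflerCoeff_succ_mul_caputo_rpow (hα0 : 0 < α) (hα1 : α < 1) (lam : ℂ)
    (k : ℕ) {t : ℝ} (ht : 0 < t) :
    ∫ τ in Ioo 0 t, mittagLefflerCoeff α lam (k + 1) *
        (α * (k + 1 : ℕ) * τ ^ (α * (k + 1 : ℕ) - 1) * (t - τ) ^ (-α) : ℝ) =
      Gamma (1 - α) * (lam * (mittagLefflerCoeff α lam k * (t ^ (α * k) : ℝ))) := by
  rw [integral_const_mul, integral_complex_ofReal,
    integral_Ioo_caputo_rpow hα1 (by positivity) ht,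
    show α * (k + 1 : ℕ) + 1 - α = α * k + 1 by push_cast; ring,
    show α * (k + 1 : ℕ) - α = α * k by push_cast; ring, ← mul_assoc lam,
    ← mittagLefflerCoeff_succ_mul_Gamma_div hα0.le]
  push_cast
  ring

theorem integral_tsum_mittagLefflerCoeff_mul_caputo_rpow (hα0 : 0 < α) (hα1 : α < 1) (lam : ℂ)
    {t : ℝ} (ht : 0 < t) :
    ∫ τ in Ioo 0 t, (∑' k : ℕ, mittagLefflerCoeff α lam (k + 1) *
        (α * (k + 1 : ℕ) * τ ^ (α * (k + 1 : ℕ) - 1) : ℝ)) * ((t - τ) ^ (-α) : ℝ) =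
      Gamma (1 - α) * (lam * ∑' k : ℕ, mittagLefflerCoeff α lam k * (t ^ (α * k) : ℝ)) := by
  set F : ℕ → ℝ → ℂ := fun k τ => mittagLefflerCoeff α lam (k + 1) *
    (α * (k + 1 : ℕ) * τ ^ (α * (k + 1 : ℕ) - 1) * (t - τ) ^ (-α) : ℝ)
  have hF : ∀ τ, (∑' k : ℕ, mittagLefflerCoeff α lam (k + 1) *
      (α * (k + 1 : ℕ) * τ ^ (α * (k + 1 : ℕ) - 1) : ℝ)) * ((t - τ) ^ (-α) : ℝ) =
      ∑' k, F k τ := fun τ => by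
    rw [← tsum_mul_right]
    simp only [F, Complex.ofReal_mul, mul_assoc]
  have hint : ∀ k, Integrable (F k) (volume.restrict (Ioo 0 t)) := fun k =>
    ((integrableOn_Ioo_caputo_rpow hα1 (by positivity) ht).ofReal).const_mul _
  have hnorm : ∀ k, ∫ τ in Ioo 0 t, ‖F k τ‖ =
      ‖(Gamma (1 - α) : ℂ) * lam‖ * (‖mittagLefflerCoeff α lam k‖ * (t ^ α) ^ k) := fun k => by
    rw [setIntegral_norm_const_mul_ofReal measurableSet_Ioo _ fun τ hτ => ?_,
      integral_mittagLefflerCoeff_succ_mul_caputo_rpow hα0 hα1 lam k ht, ← mul_assoc, norm_mul,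
      norm_mittagLefflerCoeff_mul_rpow α lam k ht.le]
    have := sub_pos.2 hτ.2
    have := hτ.1
    positivity
  have hsum : Summable fun k => ∫ τ in Ioo 0 t, ‖F k τ‖ := by
    simp_rw [hnorm]
    exact (summable_norm_mittagLefflerCoeff_mul_pow hα0 hα1.le lam _).mul_left _
  simp_rw [hF]
  rw [← integral_tsum_of_summable_integral_norm hint hsum]
  simp_rw [F, integral_mittagLefflerCoeff_succ_mul_caputo_rpow hα0 hα1 lam _ ht]
  rw [tsum_mul_left, tsum_mul_left]

end Caputo

/-- For `0 < α ≤ 1` and `λ ∈ ℂ`, the function `y(t) = E_α(λ t^α) y(0)` solves the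
Caputo fractional differential equation `∂_t^α y = λ y` for `t > 0`. -/
theorem mittagLeffler_solves_caputo
    (α : ℝ) (hα0 : 0 < α) (hα1 : α ≤ 1) (lam y0 : ℂ)
    (y : ℝ → ℂ) (hy : ∀ t : ℝ, y t = mittagLeffler α (lam * ((t ^ α : ℝ) : ℂ)) * y0) :
    ∀ t : ℝ, 0 < t → caputoDeriv α y t = lam * y t := by
  intro t ht
  have hderiv : ∀ τ, 0 < τ → deriv y τ = (∑' k : ℕ, mittagLefflerCoeff α lam (k + 1) *
      (α * (k + 1 : ℕ) * τ ^ (α * (k + 1 : ℕ) - 1) : ℝ)) * y0 := fun τ hτ => by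
    rw [funext hy]
    exact ((hasDerivAt_mittagLeffler_mul_rpow hα0 hα1 lam hτ).mul_const y0).deriv
  rw [hy t, mittagLeffler_mul_rpow_eq_tsum α lam ht.le]
  rcases hα1.lt_or_eq with hlt | rfl
  · have hΓ : Complex.Gamma (1 - α) = (Gamma (1 - α) : ℂ) := by
      rw [← Complex.ofReal_one, ← Complex.ofReal_sub, Complex.Gamma_ofReal]
    have hΓ0 : (Gamma (1 - α) : ℂ) ≠ 0 :=
      Complex.ofReal_ne_zero.2 (Gamma_pos_of_pos (sub_pos.2 hlt)).ne'
    rw [caputoDeriv, if_neg hlt.ne, setIntegral_congr_fun measurableSet_Ioo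
      fun τ hτ => by rw [hderiv τ hτ.1, mul_right_comm], integral_mul_const,
      integral_tsum_mittagLefflerCoeff_mul_caputo_rpow hα0 hlt lam ht, hΓ]
    field_simp
  · rw [caputoDeriv, if_pos rfl, hderiv t ht, ← mul_assoc, ← tsum_mul_left]
    exact congrArg (· * y0) (tsum_congr (mittagLefflerCoeff_succ_mul_deriv_rpow_one lam · t))
end

section
/- Let W₁ : ℝ^d → ℂ be measurable with W₁ ∈ L^∞({|x| ≥ 1}) and |W₁(x)| ≤ C(1 + |log|x||) for |x| ≤ 1, and let h ∈ 𝒮(ℝ^d) (Schwartz). Then for every ε > 0 there is C_ε such that for all t ≥ 1, |∫ t^{-d} W₁(x/t) h(x) dx| ≤ C_ε t^{-(d-ε)}. -/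
/-!
Since `log ‖t⁻¹ • x‖ = log ‖x‖ - log t`, the hypotheses give the pointwise bound
`‖W₁ (t⁻¹ • x)‖ ≤ C (1 + log t + |log ‖x‖|)` for every `x` and `t ≥ 1`. The logarithmic
singularity at the origin is integrable against the Schwartz function `h`, so the integral is at
most `t^{-d} C ((1 + log t) ‖h‖₁ + ∫ |log ‖x‖| ‖h x‖)`, and `log t ≤ t^ε / ε` absorbs the
logarithm into `t^ε`.
-/

open MeasureTheory Real

lemma Real.abs_log_le_rpow_neg_div {r s : ℝ} (hr₀ : 0 ≤ r) (hr₁ : r ≤ 1) (hs : 0 < s) :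
    |log r| ≤ r ^ (-s) / s := by
  rw [abs_of_nonpos (log_nonpos hr₀ hr₁), ← log_inv, rpow_neg hr₀, ← inv_rpow hr₀]
  exact log_le_rpow_div (inv_nonneg.2 hr₀) hs

lemma Real.abs_log_inv_mul_le {t r : ℝ} (ht : 1 ≤ t) :
    |log (t⁻¹ * r)| ≤ log t + |log r| := by
  rcases eq_or_ne r 0 with rfl | hr
  · simpa using log_nonneg ht
  rw [log_mul (inv_ne_zero (by positivity)) hr, log_inv]
  exact (abs_add_le _ _).trans_eq (by rw [abs_neg, abs_of_nonneg (log_nonneg ht)])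

lemma Real.one_add_log_le_rpow {t ε : ℝ} (ht : 1 ≤ t) (hε : 0 < ε) :
    1 + log t ≤ (1 + 1 / ε) * t ^ ε := by
  have h₁ : 1 ≤ t ^ ε := one_le_rpow ht hε.le
  have h₂ : log t ≤ t ^ ε / ε := log_le_rpow_div (by linarith) hε
  calc 1 + log t ≤ t ^ ε + t ^ ε / ε := by linarith
    _ = (1 + 1 / ε) * t ^ ε := by ring

section LogWeight

open Metric Module

variable {E F : Type*} [NormedAddCommGroup E] [NormedSpace ℝ E] [FiniteDimensional ℝ E]
  [MeasurableSpace E] [BorelSpace E] [NormedAddCommGroup F] [NormedSpace ℝ F]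
  {μ : Measure E} [μ.IsAddHaarMeasure]

/-- Near the origin `|log ‖x‖| ≤ 2 ‖x‖^{-1/2}` is integrable; away from it `|log ‖x‖| ≤ ‖x‖`. -/
lemma SchwartzMap.integrable_abs_log_norm_mul_norm (hE : 1 ≤ finrank ℝ E) (f : SchwartzMap E F) :
    Integrable (fun x => |log ‖x‖| * ‖f x‖) μ := by
  have hmeas : AEStronglyMeasurable (fun x => |log ‖x‖| * ‖f x‖) μ :=
    ((measurable_log.comp measurable_norm).abs.mul f.continuous.norm.measurable).aestronglyMeasurable
  set M := SchwartzMap.seminorm ℝ 0 0 f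
  have hM : ∀ x, ‖f x‖ ≤ M := SchwartzMap.norm_le_seminorm ℝ f
  rw [← integrableOn_univ, ← Set.union_compl_self (ball (0 : E) 1)]
  refine IntegrableOn.union ?_ ?_
  · refine integrableOn_ball_of_norm_le_rpow (C := 2 * M) (α := 1 / 2) hE
      (by have : (1 : ℝ) ≤ finrank ℝ E := mod_cast hE; linarith)
      ?_ hmeas
    filter_upwards [ae_restrict_mem measurableSet_ball] with x hx
    rw [mem_ball_zero_iff] at hx
    have hlog := abs_log_le_rpow_neg_div (norm_nonneg x) hx.le one_half_pos
    rw [norm_mul, norm_abs_eq_norm, norm_norm, Real.norm_eq_abs]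
    calc |log ‖x‖| * ‖f x‖ ≤ (‖x‖ ^ (-(1 / 2 : ℝ)) / (1 / 2)) * M := by gcongr; exact hM x
      _ = 2 * M * ‖x‖ ^ (-(1 / 2 : ℝ)) := by ring
  · refine (f.integrable_pow_mul μ 1).integrableOn.mono' hmeas.restrict ?_
    filter_upwards [ae_restrict_mem measurableSet_ball.compl] with x hx
    have hx : 1 ≤ ‖x‖ := by simpa using hx
    rw [norm_mul, norm_abs_eq_norm, norm_norm, Real.norm_eq_abs, pow_one,
      abs_of_nonneg (log_nonneg hx)]
    gcongr
    exact log_le_self (norm_nonneg x)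

end LogWeight

lemma norm_comp_inv_smul_le_of_log_singularity {E F : Type*} [NormedAddCommGroup E]
    [NormedSpace ℝ E] [NormedAddCommGroup F] {W : E → F} {C t : ℝ} (hC : 0 ≤ C) (ht : 1 ≤ t)
    (hout : ∀ x : E, 1 ≤ ‖x‖ → ‖W x‖ ≤ C)
    (hin : ∀ x : E, ‖x‖ ≤ 1 → ‖W x‖ ≤ C * (1 + |log ‖x‖|)) (x : E) :
    ‖W (t⁻¹ • x)‖ ≤ C * (1 + log t + |log ‖x‖|) := by
  have hnorm : ‖t⁻¹ • x‖ = t⁻¹ * ‖x‖ := by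
    rw [norm_smul, norm_inv, Real.norm_of_nonneg (by linarith)]
  rcases le_total 1 ‖t⁻¹ • x‖ with hx | hx
  · refine (hout _ hx).trans (le_mul_of_one_le_right hC ?_)
    linarith [log_nonneg ht, abs_nonneg (log ‖x‖)]
  · refine (hin _ hx).trans (mul_le_mul_of_nonneg_left ?_ hC)
    rw [add_assoc, hnorm]
    linarith [abs_log_inv_mul_le (r := ‖x‖) ht]

theorem log_singularity_decay_estimate_general
    (d : ℕ) (hd : 1 ≤ d)
    (W₁ : EuclideanSpace ℝ (Fin d) → ℂ)
    (C : ℝ) (hC : 0 < C)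
    (hout : ∀ x : EuclideanSpace ℝ (Fin d), 1 ≤ ‖x‖ → ‖W₁ x‖ ≤ C)
    (hin : ∀ x : EuclideanSpace ℝ (Fin d), ‖x‖ ≤ 1 → ‖W₁ x‖ ≤ C * (1 + |Real.log ‖x‖|))
    (h : SchwartzMap (EuclideanSpace ℝ (Fin d)) ℂ) :
    ∀ ε : ℝ, 0 < ε → ∃ Cε : ℝ, 0 < Cε ∧ ∀ t : ℝ, 1 ≤ t →
      ‖∫ x : EuclideanSpace ℝ (Fin d),
          ((t ^ (-(d : ℝ)) : ℝ) : ℂ) * W₁ (t⁻¹ • x) * h x‖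
        ≤ Cε * t ^ (-((d : ℝ) - ε)) := by
  intro ε hε
  set A := ∫ x, |log ‖x‖| * ‖h x‖
  set B := ∫ x, ‖h x‖
  have hA : Integrable fun x => |log ‖x‖| * ‖h x‖ :=
    h.integrable_abs_log_norm_mul_norm (by simpa using hd)
  have hB : Integrable fun x => ‖h x‖ := h.integrable.norm
  have hA₀ : 0 ≤ A := integral_nonneg fun x => by positivity
  have hB₀ : 0 ≤ B := integral_nonneg fun x => by positivity
  refine ⟨C * ((1 + 1 / ε) * B + A) + 1, by positivity, fun t ht => ?_⟩
  have ht₀ : 0 < t := by linarith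
  have hW := norm_comp_inv_smul_le_of_log_singularity hC.le ht hout hin
  calc ‖∫ x, ((t ^ (-(d : ℝ)) : ℝ) : ℂ) * W₁ (t⁻¹ • x) * h x‖
      ≤ ∫ x, t ^ (-(d : ℝ)) * C * ((1 + log t) * ‖h x‖ + |log ‖x‖| * ‖h x‖) := by
        refine norm_integral_le_of_norm_le (((hB.const_mul _).add hA).const_mul _)
          (ae_of_all _ fun x => ?_)
        rw [norm_mul, norm_mul, Complex.norm_real, Real.norm_of_nonneg (by positivity)]
        calc t ^ (-(d : ℝ)) * ‖W₁ (t⁻¹ • x)‖ * ‖h x‖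
            ≤ t ^ (-(d : ℝ)) * (C * (1 + log t + |log ‖x‖|)) * ‖h x‖ := by gcongr; exact hW x
          _ = _ := by ring
    _ = t ^ (-(d : ℝ)) * C * ((1 + log t) * B + A) := by
        rw [integral_const_mul, integral_add (hB.const_mul _) hA, integral_const_mul]
    _ ≤ t ^ (-(d : ℝ)) * C * ((1 + 1 / ε) * t ^ ε * B + t ^ ε * A) := by
        gcongr
        · exact one_add_log_le_rpow ht hε
        · exact le_mul_of_one_le_left hA₀ (one_le_rpow ht hε.le)
    _ = C * ((1 + 1 / ε) * B + A) * t ^ (-((d : ℝ) - ε)) := by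
        rw [show -((d : ℝ) - ε) = -d + ε by ring, rpow_add ht₀]; ring
    _ ≤ (C * ((1 + 1 / ε) * B + A) + 1) * t ^ (-((d : ℝ) - ε)) := by
        gcongr; linarith

/-- Estimate (4.13): if `W₁` is bounded for `|x| ≥ 1` and has at most a logarithmic
singularity for `|x| ≤ 1`, then for Schwartz `h` and every `ε > 0`,
`|∫ t^{-d} W₁(x/t) h(x) dx| ≤ C_ε t^{-(d-ε)}` for all `t ≥ 1`. -/
theorem log_singularity_decay_estimate
    (d : ℕ) (hd : 1 ≤ d)
    (W₁ : EuclideanSpace ℝ (Fin d) → ℂ) (hmeas : Measurable W₁)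
    (C : ℝ) (hC : 0 < C)
    (hout : ∀ x : EuclideanSpace ℝ (Fin d), 1 ≤ ‖x‖ → ‖W₁ x‖ ≤ C)
    (hin : ∀ x : EuclideanSpace ℝ (Fin d), ‖x‖ ≤ 1 → ‖W₁ x‖ ≤ C * (1 + |Real.log ‖x‖|))
    (h : SchwartzMap (EuclideanSpace ℝ (Fin d)) ℂ) :
    ∀ ε : ℝ, 0 < ε → ∃ Cε : ℝ, 0 < Cε ∧ ∀ t : ℝ, 1 ≤ t →
      ‖∫ x : EuclideanSpace ℝ (Fin d),
          ((t ^ (-(d : ℝ)) : ℝ) : ℂ) * W₁ (t⁻¹ • x) * h x‖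
        ≤ Cε * t ^ (-((d : ℝ) - ε)) :=
  log_singularity_decay_estimate_general d hd W₁ C hC hout hin h
end
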